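/- arXiv:2103.10942 — 2 statements merged into one kernel-verified Lean document; each statement's English description precedes it below -/
import Mathlib

section
/- Fix natural numbers K ≥ 1 and d with 1 ≤ d ≤ K, and reals λ > 0 and μ > 0. Then the following are equivalent: (i) for every nonempty family 𝒞 of d-element subsets of {1,…,K}, λ·|𝒞| < μ·|⋃_{c∈𝒞} c|·C(K,d), where C(K,d) is the binomial coefficient; (ii) λ < K·μ. (This states that in the redundancy-d model, where each job type c is a d-element subset of the K homogeneous servers taken with probability p_c = 1/C(K,d) and every server has capacity μ, the family of stability conditions 'λ·∑_{c∈𝒞} p_c < ∑_{s∈S(𝒞)} μ_s for all 𝒞' reduces to λ < Kμ.) -/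
open Finset

/-- Key counting inequality: `K * C(s,d) ≤ s * C(K,d)` for `d ≤ s ≤ K`, `1 ≤ d`. -/
lemma aux_choose_ineq (s K d : ℕ) (hd1 : 1 ≤ d) (hds : d ≤ s) (hsK : s ≤ K) :
    K * Nat.choose s d ≤ s * Nat.choose K d := by
  have hs1 : 1 ≤ s := le_trans hd1 hds
  have hK1 : 1 ≤ K := le_trans hs1 hsK
  obtain ⟨s', rfl⟩ : ∃ s', s = s' + 1 := ⟨s - 1, by omega⟩
  obtain ⟨K', rfl⟩ : ∃ K', K = K' + 1 := ⟨K - 1, by omega⟩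
  obtain ⟨d', rfl⟩ : ∃ d', d = d' + 1 := ⟨d - 1, by omega⟩
  have h1 : (s' + 1) * Nat.choose s' d' = Nat.choose (s' + 1) (d' + 1) * (d' + 1) :=
    Nat.add_one_mul_choose_eq s' d'
  have h2 : (K' + 1) * Nat.choose K' d' = Nat.choose (K' + 1) (d' + 1) * (d' + 1) :=
    Nat.add_one_mul_choose_eq K' d'
  have hmono : Nat.choose s' d' ≤ Nat.choose K' d' := Nat.choose_le_choose d' (by omega)
  have : (K' + 1) * Nat.choose (s' + 1) (d' + 1) * (d' + 1)
      ≤ (s' + 1) * Nat.choose (K' + 1) (d' + 1) * (d' + 1) := by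
    calc (K' + 1) * Nat.choose (s' + 1) (d' + 1) * (d' + 1)
        = (K' + 1) * ((s' + 1) * Nat.choose s' d') := by rw [h1]; ring
      _ ≤ (s' + 1) * ((K' + 1) * Nat.choose K' d') := by
          rw [show (K' + 1) * ((s' + 1) * Nat.choose s' d')
              = ((K' + 1) * (s' + 1)) * Nat.choose s' d' by ring,
            show (s' + 1) * ((K' + 1) * Nat.choose K' d')
              = ((K' + 1) * (s' + 1)) * Nat.choose K' d' by ring]
          exact Nat.mul_le_mul_left _ hmono
      _ = (s' + 1) * Nat.choose (K' + 1) (d' + 1) * (d' + 1) := by rw [h2]; ring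
  exact Nat.le_of_mul_le_mul_right this (by omega)

/-- **Reduction of the stability conditions of the redundancy-`d` model.**
In the redundancy-`d` model with `K` homogeneous servers of capacity `μ`, each
`d`-element subset `c` of the servers occurs with probability `1 / C(K,d)`.
The family of stability conditions
`λ ∑_{c ∈ 𝒞} p_c < ∑_{s ∈ S(𝒞)} μ_s` for every nonempty family `𝒞` of types,
i.e. `λ·|𝒞| < μ·|⋃_{c∈𝒞} c|·C(K,d)`, is equivalent to `λ < K·μ`. -/
theorem redundancy_d_stability_reduction (K d : ℕ) (hK : 1 ≤ K) (hd1 : 1 ≤ d) (hdK : d ≤ K)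
    (lam μ : ℝ) (hlam : 0 < lam) (hμ : 0 < μ) :
    (∀ 𝒞 : Finset (Finset (Fin K)), 𝒞.Nonempty → (∀ c ∈ 𝒞, c.card = d) →
        lam * 𝒞.card < μ * (𝒞.biUnion id).card * (K.choose d)) ↔ lam < K * μ := by
  constructor
  · intro h
    set 𝒞 : Finset (Finset (Fin K)) := powersetCard d (univ : Finset (Fin K)) with h𝒞
    have hcard : 𝒞.card = K.choose d := by
      simp [h𝒞, Finset.card_powersetCard]
    have hpos : 0 < K.choose d := Nat.choose_pos hdK
    have hne : 𝒞.Nonempty := by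
      rw [← Finset.card_pos, hcard]; exact hpos
    have hmem : ∀ c ∈ 𝒞, c.card = d := by
      intro c hc
      exact (Finset.mem_powersetCard.mp hc).2
    have hbu : 𝒞.biUnion id = (univ : Finset (Fin K)) := by
      apply Finset.eq_univ_of_forall
      intro x
      rw [Finset.mem_biUnion]
      obtain ⟨u, hsu, hut, hcard_u⟩ :=
        Finset.exists_subsuperset_card_eq (s := {x}) (t := (univ : Finset (Fin K)))
          (Finset.subset_univ _) (by simpa using hd1)
          (by simpa using hdK)
      exact ⟨u, Finset.mem_powersetCard.mpr ⟨hut, hcard_u⟩, hsu (Finset.mem_singleton_self x)⟩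
    have := h 𝒞 hne hmem
    rw [hcard, hbu] at this
    simp only [Finset.card_univ, Fintype.card_fin] at this
    have hC : (0 : ℝ) < (K.choose d : ℝ) := by exact_mod_cast hpos
    have h2 := (mul_lt_mul_iff_left₀ hC).mp this
    linarith [h2, mul_comm (μ : ℝ) (K : ℝ)]
  · intro h 𝒞 hne hcards
    set S := 𝒞.biUnion id with hS
    set s := S.card with hs
    -- each c ∈ 𝒞 is a d-subset of S
    have hsub : 𝒞 ⊆ powersetCard d S := by
      intro c hc
      exact Finset.mem_powersetCard.mpr ⟨Finset.subset_biUnion_of_mem id hc, hcards c hc⟩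
    have hcard𝒞 : 𝒞.card ≤ s.choose d := by
      have := Finset.card_le_card hsub
      rwa [Finset.card_powersetCard] at this
    have hds : d ≤ s := by
      obtain ⟨c, hc⟩ := hne
      have hcS : c ⊆ S := Finset.subset_biUnion_of_mem id hc
      have := Finset.card_le_card hcS
      rw [hcards c hc] at this
      exact this
    have hsK : s ≤ K := by
      have := Finset.card_le_univ S
      simpa using this
    have hkey : K * s.choose d ≤ s * K.choose d := aux_choose_ineq s K d hd1 hds hsK
    have hC𝒞pos : (0 : ℝ) < 𝒞.card := by
      exact_mod_cast Finset.card_pos.mpr hne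
    calc lam * 𝒞.card < K * μ * 𝒞.card := by
          apply mul_lt_mul_of_pos_right h hC𝒞pos
      _ ≤ K * μ * (s.choose d : ℝ) := by
          apply mul_le_mul_of_nonneg_left _ (by positivity)
          exact_mod_cast hcard𝒞
      _ = μ * (K * s.choose d : ℕ) := by push_cast; ring
      _ ≤ μ * (s * K.choose d : ℕ) := by
          apply mul_le_mul_of_nonneg_left _ hμ.le
          exact_mod_cast hkey
      _ = μ * s * (K.choose d : ℝ) := by push_cast; ring
end

section
/- Let X be hyper-exponentially distributed, i.e. its law is a finite mixture ∑_{i=1}^{n} p_i · Exp(θ_i) with p_i > 0, ∑ p_i = 1 and θ_i > 0. Then for every r ≥ 0, sup_{a≥0 : P(X>a)>0} E[(X−a)·1_{X−a>r} | X>a] ≤ max_{1≤i≤n} (r + 1/θ_i)·e^{−θ_i r}, and consequently X satisfies condition (LT): lim_{r→∞} sup_{a≥0 : P(X>a)>0} E[(X−a)·1_{X−a>r} | X>a] = 0. -/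
open MeasureTheory ProbabilityTheory Real Set Filter Topology
open scoped ENNReal NNReal

private lemma LT_hasDerivAt (θ a : ℝ) (hθ : 0 < θ) (x : ℝ) :
    HasDerivAt (fun x => -((x - a + 1/θ) * Real.exp (-(θ*x))))
      ((x - a) * (θ * Real.exp (-(θ*x)))) x := by
  have h1 : HasDerivAt (fun x : ℝ => x - a + 1/θ) 1 x := by
    simpa using ((hasDerivAt_id x).sub_const a).add_const (1/θ)
  have h2 : HasDerivAt (fun x : ℝ => Real.exp (-(θ*x))) (-θ * Real.exp (-(θ*x))) x := by
    have : HasDerivAt (fun x : ℝ => -(θ*x)) (-θ) x := by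
      simpa using ((hasDerivAt_id x).const_mul (-θ))
    simpa [mul_comm] using this.exp
  have := (h1.mul h2).neg
  refine this.congr_deriv ?_
  have hθ' : θ ≠ 0 := ne_of_gt hθ
  have h3 : 1/θ * θ = 1 := one_div_mul_cancel hθ'
  linear_combination (Real.exp (-(θ*x))) * h3

private lemma LT_tendsto_exp (θ : ℝ) (hθ : 0 < θ) :
    Tendsto (fun x : ℝ => Real.exp (-(θ*x))) atTop (𝓝 0) := by
  have := tendsto_rpow_mul_exp_neg_mul_atTop_nhds_zero 0 θ hθ
  simpa [Real.rpow_zero, neg_mul] using this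

private lemma LT_tendsto_mul_exp (θ : ℝ) (hθ : 0 < θ) :
    Tendsto (fun x : ℝ => x * Real.exp (-(θ*x))) atTop (𝓝 0) := by
  have := tendsto_rpow_mul_exp_neg_mul_atTop_nhds_zero 1 θ hθ
  simpa [Real.rpow_one, neg_mul] using this

private lemma LT_tendsto (θ a : ℝ) (hθ : 0 < θ) :
    Tendsto (fun x : ℝ => -((x - a + 1/θ) * Real.exp (-(θ*x)))) atTop (𝓝 0) := by
  have h := ((LT_tendsto_mul_exp θ hθ).add (((LT_tendsto_exp θ hθ).const_mul (1/θ - a)))).neg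
  simp only [mul_zero, add_zero, neg_zero] at h
  refine h.congr fun x => ?_
  ring

private lemma LT_key1 (θ a b : ℝ) (hθ : 0 < θ) (hab : a ≤ b) :
    IntegrableOn (fun x => (x - a) * (θ * Real.exp (-(θ*x)))) (Ioi b) volume ∧
    ∫ x in Ioi b, (x - a) * (θ * Real.exp (-(θ*x))) = (b - a + 1/θ) * Real.exp (-(θ*b)) := by
  have hderiv : ∀ x ∈ Ici b, HasDerivAt (fun x => -((x - a + 1/θ) * Real.exp (-(θ*x))))
      ((x - a) * (θ * Real.exp (-(θ*x)))) x := fun x _ => LT_hasDerivAt θ a hθ x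
  have hpos : ∀ x ∈ Ioi b, 0 ≤ (x - a) * (θ * Real.exp (-(θ*x))) := fun x hx => by
    have : a ≤ x := hab.trans (le_of_lt hx)
    exact mul_nonneg (by linarith) (by positivity)
  have htend := LT_tendsto θ a hθ
  refine ⟨integrableOn_Ioi_deriv_of_nonneg' hderiv hpos htend, ?_⟩
  rw [integral_Ioi_of_hasDerivAt_of_nonneg' hderiv hpos htend]
  ring

private lemma LT_key2 (θ b : ℝ) (hθ : 0 < θ) :
    IntegrableOn (fun x => θ * Real.exp (-(θ*x))) (Ioi b) volume ∧
    ∫ x in Ioi b, θ * Real.exp (-(θ*x)) = Real.exp (-(θ*b)) := by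
  have hderiv : ∀ x ∈ Ici b, HasDerivAt (fun x => -Real.exp (-(θ*x)))
      (θ * Real.exp (-(θ*x))) x := fun x _ => hasDerivAt_neg_exp_mul_exp
  have hpos : ∀ x ∈ Ioi b, 0 ≤ θ * Real.exp (-(θ*x)) := fun x _ => by positivity
  have htend : Tendsto (fun x : ℝ => -Real.exp (-(θ*x))) atTop (𝓝 0) := by
    simpa using (LT_tendsto_exp θ hθ).neg
  refine ⟨integrableOn_Ioi_deriv_of_nonneg' hderiv hpos htend, ?_⟩
  rw [integral_Ioi_of_hasDerivAt_of_nonneg' hderiv hpos htend]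
  ring

private lemma LT_pdf_eq {θ x : ℝ} (hx : 0 ≤ x) :
    exponentialPDFReal θ x = θ * Real.exp (-(θ*x)) := by
  unfold exponentialPDFReal gammaPDFReal
  rw [if_pos hx]
  simp [Real.Gamma_one]

private lemma LT_expMeasure_eq (θ : ℝ) :
    expMeasure θ
      = volume.withDensity (fun x => ((exponentialPDFReal θ x).toNNReal : ℝ≥0∞)) := by
  rfl

/-- Tail of the exponential distribution. -/
private lemma LT_tail (θ a : ℝ) (hθ : 0 < θ) (ha : 0 ≤ a) :
    expMeasure θ (Ioi a) = ENNReal.ofReal (Real.exp (-(θ*a))) := by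
  rw [LT_expMeasure_eq, withDensity_apply _ measurableSet_Ioi]
  have h1 : ∫⁻ x in Ioi a, ((exponentialPDFReal θ x).toNNReal : ℝ≥0∞)
      = ∫⁻ x in Ioi a, ENNReal.ofReal (θ * Real.exp (-(θ*x))) := by
    refine setLIntegral_congr_fun measurableSet_Ioi (fun x hx => ?_)
    rw [← LT_pdf_eq (ha.trans (le_of_lt hx))]
    rfl
  rw [h1, ← MeasureTheory.ofReal_integral_eq_lintegral_ofReal (LT_key2 θ a hθ).1
      (ae_of_all _ fun x => by positivity), (LT_key2 θ a hθ).2]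

/-- Component integral: integrability and value of `∫_{Ioi b} (x - a) d(expMeasure θ)`. -/
private lemma LT_comp (θ a b : ℝ) (hθ : 0 < θ) (ha : 0 ≤ a) (hab : a ≤ b) :
    IntegrableOn (fun x => x - a) (Ioi b) (expMeasure θ) ∧
    ∫ x in Ioi b, (x - a) ∂(expMeasure θ) = (b - a + 1/θ) * Real.exp (-(θ*b)) := by
  have fmeas : Measurable (fun x => (exponentialPDFReal θ x).toNNReal) :=
    (measurable_exponentialPDFReal θ).real_toNNReal
  have hres : (expMeasure θ).restrict (Ioi b)
      = (volume.restrict (Ioi b)).withDensity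
          (fun x => ((exponentialPDFReal θ x).toNNReal : ℝ≥0∞)) := by
    rw [LT_expMeasure_eq, restrict_withDensity measurableSet_Ioi]
  have heq : ∀ x ∈ Ioi b, (exponentialPDFReal θ x).toNNReal • (x - a)
      = (x - a) * (θ * Real.exp (-(θ*x))) := by
    intro x hx
    have hx0 : 0 ≤ x := ha.trans (hab.trans (le_of_lt hx))
    rw [NNReal.smul_def, Real.coe_toNNReal _ (exponentialPDFReal_nonneg hθ x),
      LT_pdf_eq hx0, smul_eq_mul]
    ring
  have hint : Integrable (fun x => (exponentialPDFReal θ x).toNNReal • (x - a))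
      (volume.restrict (Ioi b)) := by
    refine ((LT_key1 θ a b hθ hab).1).congr ?_
    rw [Filter.eventuallyEq_iff_exists_mem]
    exact ⟨Ioi b, self_mem_ae_restrict measurableSet_Ioi,
      fun x hx => (heq x hx).symm⟩
  constructor
  · rw [IntegrableOn, hres, integrable_withDensity_iff_integrable_smul fmeas]
    exact hint
  · have : ∫ x in Ioi b, (x - a) ∂(expMeasure θ)
        = ∫ x, (exponentialPDFReal θ x).toNNReal • (x - a) ∂(volume.restrict (Ioi b)) := by
      rw [show (∫ x in Ioi b, (x - a) ∂(expMeasure θ))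
          = ∫ x, (x - a) ∂((expMeasure θ).restrict (Ioi b)) from rfl, hres,
        integral_withDensity_eq_integral_smul fmeas]
    rw [this, setIntegral_congr_fun measurableSet_Ioi heq, (LT_key1 θ a b hθ hab).2]

/-- **Hyper-exponential distributions satisfy condition (LT).**
Let `X` be hyper-exponentially distributed, i.e. its law is the finite mixture
`∑ i, p i • Exp(θ i)` with `p i > 0`, `∑ i, p i = 1` and `θ i > 0`.  Then for
every `r ≥ 0`,
`sup_{a ≥ 0 : ℙ(X>a)>0} E[(X−a)·1_{X−a>r} | X>a] ≤ max_i (r + 1/θ i)·e^{−θ i r}`,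
and consequently `X` satisfies the light-tail condition (LT):
`lim_{r→∞} sup_{a ≥ 0 : ℙ(X>a)>0} E[(X−a)·1_{X−a>r} | X>a] = 0`
(stated in ε-form).  Here `E[Z | X>a] = E[Z·1_{X>a}]/ℙ(X>a)`. -/
theorem hyperexponential_satisfies_LT (n : ℕ) (p θ : Fin n → ℝ)
    (hp : ∀ i, 0 < p i) (hpsum : ∑ i, p i = 1) (hθ : ∀ i, 0 < θ i)
    (μ : Measure ℝ) (hμ : μ = ∑ i : Fin n, ENNReal.ofReal (p i) • expMeasure (θ i)) :
    (∀ r ≥ (0 : ℝ), ∀ a ≥ (0 : ℝ), 0 < μ {x : ℝ | a < x} →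
      (∫ x in {x : ℝ | a < x},
          Set.indicator {x : ℝ | r < x - a} (fun x => x - a) x ∂μ) /
        (μ {x : ℝ | a < x}).toReal
      ≤ ⨆ i : Fin n, (r + 1 / θ i) * Real.exp (-θ i * r)) ∧
    (∀ ε > (0 : ℝ), ∃ R : ℝ, ∀ r ≥ R, ∀ a ≥ (0 : ℝ),
      0 < μ {x : ℝ | a < x} →
      (∫ x in {x : ℝ | a < x},
          Set.indicator {x : ℝ | r < x - a} (fun x => x - a) x ∂μ) /
        (μ {x : ℝ | a < x}).toReal < ε) := by
  -- `n ≠ 0` since the weights sum to `1`.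
  have hn : Nonempty (Fin n) := by
    rcases Nat.eq_zero_or_pos n with h | h
    · subst h; simp at hpsum
    · exact Fin.pos_iff_nonempty.mp h
  -- The main estimate.
  have main : ∀ r ≥ (0 : ℝ), ∀ a ≥ (0 : ℝ),
      (∫ x in {x : ℝ | a < x},
          Set.indicator {x : ℝ | r < x - a} (fun x => x - a) x ∂μ) /
        (μ {x : ℝ | a < x}).toReal
      ≤ ⨆ i : Fin n, (r + 1 / θ i) * Real.exp (-θ i * r) := by
    intro r hr a ha
    set b := a + r with hb
    have hab : a ≤ b := by simp [hb, hr]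
    -- Identify the sets.
    have hset1 : {x : ℝ | a < x} = Ioi a := rfl
    have hset2 : {x : ℝ | r < x - a} = Ioi b := by
      ext x
      simp only [mem_setOf_eq, mem_Ioi, hb]
      constructor <;> intro <;> linarith
    rw [hset1, hset2]
    -- Numerator computation.
    have hnum : (∫ x in Ioi a, Set.indicator (Ioi b) (fun x => x - a) x ∂μ)
        = ∑ i : Fin n, p i * ((b - a + 1/θ i) * Real.exp (-(θ i * b))) := by
      rw [setIntegral_indicator measurableSet_Ioi,
        show Ioi a ∩ Ioi b = Ioi b by
          rw [Set.Ioi_inter_Ioi, max_eq_right hab]]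
      have hres : μ.restrict (Ioi b)
          = ∑ i : Fin n, ENNReal.ofReal (p i) • (expMeasure (θ i)).restrict (Ioi b) := by
        rw [hμ, ← Measure.sum_fintype, Measure.restrict_sum_of_countable,
          ← Measure.sum_fintype]
        simp [Measure.restrict_smul]
      have hInt : ∀ i : Fin n, Integrable (fun x => x - a)
          (ENNReal.ofReal (p i) • (expMeasure (θ i)).restrict (Ioi b)) := fun i =>
        ((LT_comp (θ i) a b (hθ i) ha hab).1).smul_measure ENNReal.ofReal_ne_top
      calc (∫ x in Ioi b, (x - a) ∂μ)
          = ∫ x, (x - a) ∂(∑ i : Fin n,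
              ENNReal.ofReal (p i) • (expMeasure (θ i)).restrict (Ioi b)) := by
            rw [← hres]
        _ = ∑ i : Fin n, ∫ x, (x - a)
              ∂(ENNReal.ofReal (p i) • (expMeasure (θ i)).restrict (Ioi b)) :=
            integral_finset_sum_measure fun i _ => hInt i
        _ = ∑ i : Fin n, p i * ((b - a + 1/θ i) * Real.exp (-(θ i * b))) := by
            refine Finset.sum_congr rfl fun i _ => ?_
            rw [integral_smul_measure, ENNReal.toReal_ofReal (hp i).le,
              smul_eq_mul]
            congr 1
            exact (LT_comp (θ i) a b (hθ i) ha hab).2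
    -- Denominator computation.
    have hden : μ (Ioi a) = ENNReal.ofReal (∑ i : Fin n, p i * Real.exp (-(θ i * a))) := by
      rw [hμ, Measure.finset_sum_apply]
      rw [ENNReal.ofReal_sum_of_nonneg fun i _ => mul_nonneg (hp i).le (Real.exp_nonneg _)]
      refine Finset.sum_congr rfl fun i _ => ?_
      rw [Measure.smul_apply, LT_tail (θ i) a (hθ i) ha, smul_eq_mul,
        ← ENNReal.ofReal_mul (hp i).le]
    set D := ∑ i : Fin n, p i * Real.exp (-(θ i * a)) with hD
    have hDpos : 0 < D :=
      Finset.sum_pos (fun i _ => mul_pos (hp i) (Real.exp_pos _)) Finset.univ_nonempty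
    have hdenR : (μ (Ioi a)).toReal = D := by
      rw [hden, ENNReal.toReal_ofReal hDpos.le]
    rw [hnum, hdenR]
    -- The supremum bound.
    set C := ⨆ i : Fin n, (r + 1 / θ i) * Real.exp (-θ i * r) with hC
    have hbdd : BddAbove (Set.range fun i : Fin n =>
        (r + 1 / θ i) * Real.exp (-θ i * r)) := (Set.finite_range _).bddAbove
    rw [div_le_iff₀ hDpos]
    calc ∑ i : Fin n, p i * ((b - a + 1/θ i) * Real.exp (-(θ i * b)))
        = ∑ i : Fin n, (p i * Real.exp (-(θ i * a)))
            * ((r + 1/θ i) * Real.exp (-θ i * r)) := by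
          refine Finset.sum_congr rfl fun i _ => ?_
          rw [hb, show -(θ i * (a + r)) = -(θ i * a) + -θ i * r by ring,
            Real.exp_add]
          ring_nf
      _ ≤ ∑ i : Fin n, (p i * Real.exp (-(θ i * a))) * C := by
          refine Finset.sum_le_sum fun i _ => ?_
          refine mul_le_mul_of_nonneg_left ?_ (mul_nonneg (hp i).le (Real.exp_nonneg _))
          exact le_ciSup hbdd i
      _ = C * D := by rw [← Finset.sum_mul, hD]; ring
  constructor
  · intro r hr a ha _
    exact main r hr a ha
  -- The limit statement.
  · intro ε hε
    have htends : ∀ i : Fin n,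
        Tendsto (fun r : ℝ => (r + 1 / θ i) * Real.exp (-θ i * r)) atTop (𝓝 0) := by
      intro i
      have h := ((LT_tendsto_mul_exp (θ i) (hθ i)).add
        ((LT_tendsto_exp (θ i) (hθ i)).const_mul (1 / θ i)))
      simp only [mul_zero, add_zero] at h
      refine h.congr fun x => ?_
      rw [neg_mul]
      ring
    have hev : ∀ᶠ r in atTop, (∀ i : Fin n,
        (r + 1 / θ i) * Real.exp (-θ i * r) ≤ ε / 2) ∧ (0 : ℝ) ≤ r := by
      refine Filter.Eventually.and ?_ (eventually_ge_atTop 0)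
      rw [eventually_all]
      intro i
      exact ((htends i).eventually_lt_const (by linarith)).mono fun x hx => hx.le
    obtain ⟨R, hR⟩ := eventually_atTop.mp hev
    refine ⟨R, fun r hrR a ha _ => ?_⟩
    obtain ⟨h1, h2⟩ := hR r hrR
    calc (∫ x in {x : ℝ | a < x},
            Set.indicator {x : ℝ | r < x - a} (fun x => x - a) x ∂μ) /
          (μ {x : ℝ | a < x}).toReal
        ≤ ⨆ i : Fin n, (r + 1 / θ i) * Real.exp (-θ i * r) := main r h2 a ha
      _ ≤ ε / 2 := ciSup_le h1
      _ < ε := by linarith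
end
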